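/- arXiv:1001.1663 — 2 statements merged into one kernel-verified Lean document; each statement's English description precedes it below -/
import Mathlib

section
/- Every finite proper extension of a finite co-Heyting algebra L₀ is the union of a finite tower L₀ ⊆ L₁ ⊆ ⋯ ⊆ Lₙ = L of co-Heyting subalgebras in which each Lᵢ₊₁ is generated over Lᵢ by a primitive tuple over Lᵢ. -/
/-- `Ll b a` means `b ≪ a`: `a \ b = a` and `b ≤ a`. -/
def Ll {L : Type*} [CoheytingAlgebra L] (b a : L) : Prop := a \ b = a ∧ b ≤ a

/-- `S` is (the underlying set of) a co-Heyting subalgebra. -/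
def IsSubalg {L : Type*} [CoheytingAlgebra L] (S : Set L) : Prop :=
  ⊥ ∈ S ∧ ⊤ ∈ S ∧ ∀ a ∈ S, ∀ b ∈ S, a ⊔ b ∈ S ∧ a ⊓ b ∈ S ∧ a \ b ∈ S

/-- `g` is join irreducible in the subalgebra `S`. -/
def SupIrredIn {L : Type*} [CoheytingAlgebra L] (S : Set L) (g : L) : Prop :=
  g ∈ S ∧ g ≠ ⊥ ∧ ∀ x ∈ S, ∀ y ∈ S, g = x ⊔ y → g = x ∨ g = y

/-- `(x₁, x₂)` is a primitive tuple over the subalgebra `S`, with witness `g`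
(join irreducible in `S`) whose predecessor in `S` is `gm` (`g⁻`). -/
def Primitive {L : Type*} [CoheytingAlgebra L] (S : Set L) (g gm x₁ x₂ : L) : Prop :=
  x₁ ∉ S ∧ x₂ ∉ S ∧ SupIrredIn S g ∧ IsLUB {b | b ∈ S ∧ b < g} gm ∧
  gm ⊓ x₁ ∈ S ∧ gm ⊓ x₂ ∈ S ∧
  ((x₁ = x₂ ∧ Ll (gm ⊓ x₁) x₁ ∧ Ll x₁ g) ∨
   (x₁ ≠ x₂ ∧ x₁ ⊓ x₂ ∈ S ∧ g \ x₁ = x₂ ∧ g \ x₂ = x₁))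

/-- `T` is the co-Heyting subalgebra generated by `S ∪ {x₁, x₂}`. -/
def GeneratesOver {L : Type*} [CoheytingAlgebra L] (S T : Set L) (x₁ x₂ : L) : Prop :=
  IsSubalg T ∧ S ⊆ T ∧ x₁ ∈ T ∧ x₂ ∈ T ∧
  ∀ Tp : Set L, IsSubalg Tp → S ⊆ Tp → x₁ ∈ Tp → x₂ ∈ Tp → T ⊆ Tp

/-!
Every element of a finite distributive lattice is a join of sup-primes, so a proper subalgebra `S`
misses some sup-prime. Let `x` be a sup-prime outside `S` for which the pair
(least element `g` of `S` above `x`, `x`) is lexicographically minimal. Then `g` is join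
irreducible in `S`, everything below `g⁻` and everything strictly below `x` lies in `S`, and
`(x, x)` or `(x, g \ x)` is primitive over `S`, according as `x ≤ g \ x` or not. Adjoining it
gives a strictly larger subalgebra, and finiteness ends the tower.
-/

lemma SupClosed.exists_isGreatest {α : Type*} [SemilatticeSup α] {s : Set α} (hs : SupClosed s)
    (hfin : s.Finite) (hne : s.Nonempty) : ∃ a, IsGreatest s a := by
  obtain ⟨m, hm⟩ := hfin.exists_maximal hne
  exact ⟨m, hm.prop, fun b hb => le_sup_right.trans (hm.eq_of_ge (hs hm.prop hb) le_sup_left).le⟩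

section SupPrime

variable {α : Type*} [GeneralizedCoheytingAlgebra α] {a b g : α}

lemma SupPrime.sdiff_eq_self (ha : SupPrime a) (h : ¬ a ≤ b) : a \ b = a :=
  sdiff_le.antisymm ((ha.2 le_sup_sdiff).resolve_left h)

lemma SupPrime.sdiff_sdiff_eq_self (ha : SupPrime a) (hag : a ≤ g) (h : ¬ a ≤ g \ a) :
    g \ (g \ a) = a :=
  sdiff_sdiff_le.antisymm ((ha.sdiff_eq_self h).ge.trans (sdiff_le_sdiff_right hag))

lemma sdiff_eq_self_of_le_sdiff (h : a ≤ g \ a) : g \ a = g :=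
  sdiff_le.antisymm (le_sup_sdiff.trans (sup_le h le_rfl))

end SupPrime

namespace IsSubalg

variable {L : Type*} [CoheytingAlgebra L] {S : Set L} {a b : L}

lemma bot_mem (hS : IsSubalg S) : ⊥ ∈ S := hS.1

lemma top_mem (hS : IsSubalg S) : ⊤ ∈ S := hS.2.1

lemma sup_mem (hS : IsSubalg S) (ha : a ∈ S) (hb : b ∈ S) : a ⊔ b ∈ S := (hS.2.2 a ha b hb).1

lemma inf_mem (hS : IsSubalg S) (ha : a ∈ S) (hb : b ∈ S) : a ⊓ b ∈ S := (hS.2.2 a ha b hb).2.1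

lemma sdiff_mem (hS : IsSubalg S) (ha : a ∈ S) (hb : b ∈ S) : a \ b ∈ S :=
  (hS.2.2 a ha b hb).2.2

lemma sInter {𝒯 : Set (Set L)} (h : ∀ T ∈ 𝒯, IsSubalg T) : IsSubalg (⋂₀ 𝒯) :=
  ⟨Set.mem_sInter.2 fun T hT => (h T hT).bot_mem, Set.mem_sInter.2 fun T hT => (h T hT).top_mem,
    fun _ ha _ hb =>
      ⟨Set.mem_sInter.2 fun T hT => (h T hT).sup_mem (ha T hT) (hb T hT),
        Set.mem_sInter.2 fun T hT => (h T hT).inf_mem (ha T hT) (hb T hT),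
        Set.mem_sInter.2 fun T hT => (h T hT).sdiff_mem (ha T hT) (hb T hT)⟩⟩

lemma exists_primitive_of_supPrime {x g gm : L} (hS : IsSubalg S) (hx : SupPrime x)
    (hxS : x ∉ S) (hxg : x ≤ g) (hg : SupIrredIn S g) (hgm : IsLUB {b | b ∈ S ∧ b < g} gm)
    (hxgm : ¬ x ≤ gm) (hle_gm : ∀ b ≤ gm, b ∈ S) (hlt_x : ∀ b < x, b ∈ S) :
    ∃ x₁ x₂, Primitive S g gm x₁ x₂ := by
  have hgmx : gm ⊓ x ∈ S := hle_gm _ inf_le_left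
  by_cases hxy : x ≤ g \ x
  · have hll : Ll (gm ⊓ x) x :=
      ⟨hx.sdiff_eq_self fun h => hxgm (h.trans inf_le_left), inf_le_right⟩
    exact ⟨x, x, hxS, hxS, hg, hgm, hgmx, hgmx,
      Or.inl ⟨rfl, hll, sdiff_eq_self_of_le_sdiff hxy, hxg⟩⟩
  · have hgyx : g \ (g \ x) = x := hx.sdiff_sdiff_eq_self hxg hxy
    have hyS : g \ x ∉ S := fun hy => hxS (hgyx ▸ hS.sdiff_mem hg.1 hy)
    exact ⟨x, g \ x, hxS, hyS, hg, hgm, hgmx, hle_gm _ inf_le_left,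
      Or.inr ⟨fun h => hxy h.le, hlt_x _ (inf_le_left.lt_of_ne fun h => hxy (inf_eq_left.1 h)),
        rfl, hgyx⟩⟩

end IsSubalg

section Finite

variable {L : Type*} [CoheytingAlgebra L] [Finite L] {S : Set L} {a b : L}

/-- The least element of `S` above `a` (or `⊤`, if there is none). -/
noncomputable def ceilIn (S : Set L) (a : L) : L :=
  (Set.toFinite {s | s ∈ S ∧ a ≤ s}).toFinset.inf id

lemma ceilIn_le (hb : b ∈ S) (hab : a ≤ b) : ceilIn S a ≤ b :=
  Finset.inf_le (f := id) ((Set.Finite.mem_toFinset _).2 ⟨hb, hab⟩)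

lemma le_ceilIn : a ≤ ceilIn S a :=
  Finset.le_inf fun _ hs => ((Set.Finite.mem_toFinset _).1 hs).2

namespace IsSubalg

lemma ceilIn_mem (hS : IsSubalg S) : ceilIn S a ∈ S :=
  Finset.inf_mem S hS.top_mem (fun _ hx _ hy => hS.inf_mem hx hy) _ _
    fun _ hs => ((Set.Finite.mem_toFinset _).1 hs).1

lemma ceilIn_mono (hS : IsSubalg S) (hab : a ≤ b) : ceilIn S a ≤ ceilIn S b :=
  ceilIn_le hS.ceilIn_mem (hab.trans le_ceilIn)

lemma supIrredIn_ceilIn (hS : IsSubalg S) (ha : SupPrime a) : SupIrredIn S (ceilIn S a) := by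
  refine ⟨hS.ceilIn_mem, fun h => ha.ne_bot (le_bot_iff.1 (h ▸ le_ceilIn)), ?_⟩
  intro u hu v hv huv
  have hauv : a ≤ u ⊔ v := huv ▸ le_ceilIn
  exact (ha.2 hauv).imp (fun h => (ceilIn_le hu h).antisymm (huv ▸ le_sup_left))
    (fun h => (ceilIn_le hv h).antisymm (huv ▸ le_sup_right))

lemma mem_of_forall_supPrime (hS : IsSubalg S) (h : ∀ p, SupPrime p → p ≤ a → p ∈ S) :
    a ∈ S := by
  obtain ⟨s, hsup, hirr⟩ := exists_supIrred_decomposition a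
  rw [← hsup]
  exact Finset.sup_mem S hS.bot_mem (fun _ hx _ hy => hS.sup_mem hx hy) _ _
    fun p hp => h p (hirr hp).supPrime (hsup ▸ Finset.le_sup (f := id) hp)

lemma exists_isGreatest_lt {g : L} (hS : IsSubalg S) (hg : SupIrredIn S g) :
    ∃ gm, IsGreatest {b | b ∈ S ∧ b < g} gm := by
  refine SupClosed.exists_isGreatest ?_ (Set.toFinite _)
    ⟨⊥, hS.bot_mem, bot_lt_iff_ne_bot.2 hg.2.1⟩
  rintro u ⟨hu, hug⟩ v ⟨hv, hvg⟩
  refine ⟨hS.sup_mem hu hv, (sup_le hug.le hvg.le).lt_of_ne fun h => ?_⟩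
  exact (hg.2.2 u hu v hv h.symm).elim (fun h' => hug.ne h'.symm) fun h' => hvg.ne h'.symm

lemma exists_primitive (hS : IsSubalg S) (hne : S ≠ Set.univ) :
    ∃ g gm x₁ x₂, Primitive S g gm x₁ x₂ := by
  obtain ⟨a, haS⟩ := (Set.ne_univ_iff_exists_notMem S).1 hne
  have hbad : ∃ p, SupPrime p ∧ p ∉ S := by
    by_contra! h
    exact haS (hS.mem_of_forall_supPrime fun p hp _ => h p hp)
  obtain ⟨x, ⟨hx, hxS⟩, hmin⟩ := exists_minimalFor_of_wellFoundedLT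
    (fun p => SupPrime p ∧ p ∉ S) (fun p => toLex (ceilIn S p, p)) hbad
  have hmin' : ∀ p, SupPrime p → ceilIn S p < ceilIn S x ∨ ceilIn S p = ceilIn S x ∧ p < x →
      p ∈ S := fun p hp hlt => by
    by_contra hpS
    have hlt' := (Prod.Lex.toLex_lt_toLex (x := (ceilIn S p, p)) (y := (ceilIn S x, x))).2 hlt
    exact hlt'.not_ge (hmin ⟨hp, hpS⟩ hlt'.le)
  obtain ⟨gm, ⟨hgmS, hgm_lt⟩, hgm_ub⟩ := hS.exists_isGreatest_lt (hS.supIrredIn_ceilIn hx)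
  have hle_gm : ∀ b ≤ gm, b ∈ S := fun b hb => hS.mem_of_forall_supPrime fun p hp hpb =>
    hmin' p hp (Or.inl ((ceilIn_le hgmS (hpb.trans hb)).trans_lt hgm_lt))
  have hlt_x : ∀ b < x, b ∈ S := fun b hb => hS.mem_of_forall_supPrime fun p hp hpb =>
    have hpx := hpb.trans_lt hb
    hmin' p hp ((hS.ceilIn_mono hpx.le).lt_or_eq.imp_right fun h => ⟨h, hpx⟩)
  have hxgm : ¬ x ≤ gm := fun h => (ceilIn_le hgmS h).not_gt hgm_lt
  exact ⟨ceilIn S x, gm, hS.exists_primitive_of_supPrime hx hxS le_ceilIn (hS.supIrredIn_ceilIn hx)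
    ⟨hgm_ub, fun _ hu => hu ⟨hgmS, hgm_lt⟩⟩ hxgm hle_gm hlt_x⟩

end IsSubalg

end Finite

section Tower

variable {L : Type*} [CoheytingAlgebra L]

def subalgClosure (A : Set L) : Set L := ⋂₀ {T | IsSubalg T ∧ A ⊆ T}

lemma generatesOver_subalgClosure (S : Set L) (x₁ x₂ : L) :
    GeneratesOver S (subalgClosure (insert x₁ (insert x₂ S))) x₁ x₂ := by
  have hsub : insert x₁ (insert x₂ S) ⊆ subalgClosure (insert x₁ (insert x₂ S)) :=
    Set.subset_sInter fun _ hT => hT.2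
  refine ⟨IsSubalg.sInter fun _ hT => hT.1, fun s hs => hsub (by simp [hs]), hsub (by simp),
    hsub (by simp), fun Tp hTp hS h₁ h₂ => Set.sInter_subset_of_mem ⟨hTp, ?_⟩⟩
  exact Set.insert_subset h₁ (Set.insert_subset h₂ hS)

def IsPrimitiveStep (S T : Set L) : Prop :=
  IsSubalg S ∧ ∃ g gm x₁ x₂, Primitive S g gm x₁ x₂ ∧ GeneratesOver S T x₁ x₂

def primitiveStepRel (L : Type*) [CoheytingAlgebra L] : SetRel (Set L) (Set L) :=
  {q | IsPrimitiveStep q.1 q.2}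

variable [Finite L] {S : Set L}

lemma IsSubalg.exists_primitiveStep (hS : IsSubalg S) (hne : S ≠ Set.univ) :
    ∃ T, S ⊂ T ∧ IsSubalg T ∧ IsPrimitiveStep S T := by
  obtain ⟨g, gm, x₁, x₂, hprim⟩ := hS.exists_primitive hne
  have hgen := generatesOver_subalgClosure S x₁ x₂
  exact ⟨_, Set.ssubset_iff_subset_ne.2 ⟨hgen.2.1, fun h => hprim.1 (h ▸ hgen.2.2.1)⟩, hgen.1,
    hS, g, gm, x₁, x₂, hprim, hgen⟩

lemma IsSubalg.exists_relSeries_primitiveStep (hS : IsSubalg S) :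
    ∃ p : RelSeries (primitiveStepRel L), p.head = S ∧ p.last = Set.univ := by
  induction S using WellFoundedGT.induction with
  | _ S ih =>
    by_cases hne : S = Set.univ
    · exact ⟨RelSeries.singleton _ S, rfl, hne⟩
    obtain ⟨T, hST, hT, hstep⟩ := hS.exists_primitiveStep hne
    obtain ⟨p, hhead, hlast⟩ := ih T hST hT
    exact ⟨p.cons S (hhead ▸ hstep), rfl, (p.last_cons _ _).trans hlast⟩

end Tower

theorem exists_tower_of_primitive_extensions_general {L : Type*} [CoheytingAlgebra L] [Finite L]
    (S : Set L) (hS : IsSubalg S) :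
    ∃ (n : ℕ) (T : Fin (n + 1) → Set L),
      T 0 = S ∧ T (Fin.last n) = Set.univ ∧
      ∀ i : Fin n, IsSubalg (T i.castSucc) ∧
        ∃ g gm x₁ x₂ : L, Primitive (T i.castSucc) g gm x₁ x₂ ∧
          GeneratesOver (T i.castSucc) (T i.succ) x₁ x₂ := by
  obtain ⟨p, hhead, hlast⟩ := hS.exists_relSeries_primitiveStep
  exact ⟨p.length, p.toFun, hhead, hlast, p.step⟩

theorem exists_tower_of_primitive_extensions {L : Type*} [CoheytingAlgebra L] [Finite L]
    (S : Set L) (hS : IsSubalg S) (hne : S ≠ Set.univ) :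
    ∃ (n : ℕ) (T : Fin (n + 1) → Set L),
      T 0 = S ∧ T (Fin.last n) = Set.univ ∧
      ∀ i : Fin n, IsSubalg (T i.castSucc) ∧
        ∃ g gm x₁ x₂ : L, Primitive (T i.castSucc) g gm x₁ x₂ ∧
          GeneratesOver (T i.castSucc) (T i.succ) x₁ x₂ :=
  exists_tower_of_primitive_extensions_general S hS
end

section
/- Let L be a finite co-Heyting algebra and a, b₁, b₂ ∈ L with b₁ ⊔ b₂ ≪ a and a ≠ ⊥. Then there exists a finite co-Heyting algebra L' containing L as a subalgebra and nonzero elements a₁, a₂ ∈ L' such that a \ a₂ = a₁ ≥ b₁, a \ a₁ = a₂ ≥ b₂, and a₁ ⊓ a₂ = b₁ ⊓ b₂. -/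
/-- An embedding of co-Heyting algebras: injective and preserving `⊥`, `⊤`, `⊔`, `⊓`, `\`. -/
def IsCoheytingEmb {K L : Type*} [CoheytingAlgebra K] [CoheytingAlgebra L] (f : K → L) : Prop :=
  Function.Injective f ∧ f ⊥ = ⊥ ∧ f ⊤ = ⊤ ∧
    (∀ a b, f (a ⊔ b) = f a ⊔ f b) ∧ (∀ a b, f (a ⊓ b) = f a ⊓ f b) ∧
    (∀ a b, f (a \ b) = f a \ f b)

/-- There is an embedding `f` of `L` into `K` and nonzero `a₁, a₂` in `K` splitting
`f a` along `f b₁ ⊓ f b₂`. -/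
def SplitExt (L : Type*) [CoheytingAlgebra L] (K : Type*) [CoheytingAlgebra K]
    (a b₁ b₂ : L) : Prop :=
  ∃ (f : L → K) (a₁ a₂ : K), IsCoheytingEmb f ∧ a₁ ≠ ⊥ ∧ a₂ ≠ ⊥ ∧
    f a \ a₂ = a₁ ∧ f b₁ ≤ a₁ ∧ f a \ a₁ = a₂ ∧ f b₂ ≤ a₂ ∧ a₁ ⊓ a₂ = f b₁ ⊓ f b₂


/-!
By Birkhoff duality `L` is the lattice of lower sets of a finite poset `Q`, and pulling lower sets
back along a surjective p-morphism `P → Q` embeds `LowerSet Q` into `LowerSet P` as a co-Heyting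
algebra. Take for `P` the poset `Q` in which every point of `A` outside `B₁ ∪ B₂` is doubled, the
two copies being incomparable, and let `Aᵢ` consist of the points over `A` that do not belong to
the other side. Since `b₁ ⊔ b₂ ≪ a`, every point of `A` lies below a doubled point, and this is
what makes `A \ A₂ = A₁` and `A \ A₁ = A₂`.
-/

open Function

theorem IsCoheytingEmb.comp {K L M : Type*} [CoheytingAlgebra K] [CoheytingAlgebra L]
    [CoheytingAlgebra M] {f : L → M} {g : K → L} (hf : IsCoheytingEmb f)
    (hg : IsCoheytingEmb g) : IsCoheytingEmb (f ∘ g) := by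
  obtain ⟨hf, hf_bot, hf_top, hf_sup, hf_inf, hf_sdiff⟩ := hf
  obtain ⟨hg, hg_bot, hg_top, hg_sup, hg_inf, hg_sdiff⟩ := hg
  exact ⟨hf.comp hg, by simp [hg_bot, hf_bot], by simp [hg_top, hf_top],
    by simp [hg_sup, hf_sup], by simp [hg_inf, hf_inf], by simp [hg_sdiff, hf_sdiff]⟩

theorem OrderIso.isCoheytingEmb {K L : Type*} [CoheytingAlgebra K] [CoheytingAlgebra L]
    (e : K ≃o L) : IsCoheytingEmb e :=
  ⟨e.injective, map_bot e, map_top e, map_sup e, map_inf e, map_sdiff e⟩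

theorem Ll.map_orderIso {K L : Type*} [CoheytingAlgebra K] [CoheytingAlgebra L] {a b : K}
    (h : Ll b a) (e : K ≃o L) : Ll (e b) (e a) :=
  ⟨by rw [← map_sdiff, h.1], e.monotone h.2⟩

theorem SplitExt.of_comap {K L M : Type*} [CoheytingAlgebra K] [CoheytingAlgebra L]
    [CoheytingAlgebra M] {g : K → L} (hg : IsCoheytingEmb g) {a b₁ b₂ : K}
    (h : SplitExt L M (g a) (g b₁) (g b₂)) : SplitExt K M a b₁ b₂ :=
  let ⟨f, a₁, a₂, hf, hsplit⟩ := h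
  ⟨f ∘ g, a₁, a₂, hf.comp hg, hsplit⟩

/-- Birkhoff's representation, with the poset of sup-irreducibles moved to `Type`. -/
theorem exists_orderIso_lowerSet (L : Type*) [DistribLattice L] [OrderBot L] [Finite L] :
    ∃ (Q : Type) (_ : Preorder Q), Finite Q ∧ Nonempty (L ≃o LowerSet Q) := by
  classical
  have := Fintype.ofFinite L
  exact ⟨Shrink.{0} {a : L // SupIrred a}, inferInstance, inferInstance,
    ⟨OrderIso.lowerSetSupIrred.trans (LowerSet.map (orderIsoShrink _))⟩⟩

namespace LowerSet

variable {α β : Type*} [Preorder α] [Preorder β]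

theorem mem_sdiff_iff {s t : LowerSet α} {a : α} : a ∈ s \ t ↔ ∃ b ∈ s, b ∉ t ∧ a ≤ b := by
  constructor
  · intro ha
    let u : LowerSet α := ⟨{a | ∃ b ∈ s, b ∉ t ∧ a ≤ b},
      fun _ _ hcb ⟨b, hbs, hbt, hab⟩ => ⟨b, hbs, hbt, hcb.trans hab⟩⟩
    have hsu : s \ t ≤ u := sdiff_le_iff.2 fun b hb => by
      by_cases hbt : b ∈ t
      · exact mem_sup_iff.2 (Or.inl hbt)
      · exact mem_sup_iff.2 (Or.inr ⟨b, hb, hbt, le_rfl⟩)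
    exact hsu ha
  · rintro ⟨b, hbs, hbt, hab⟩
    rcases mem_sup_iff.1 ((le_sup_sdiff : s ≤ t ⊔ s \ t) hbs) with hb | hb
    · exact absurd hb hbt
    · exact (s \ t).lower hab hb

def comap (f : α →o β) (s : LowerSet β) : LowerSet α :=
  ⟨f ⁻¹' s, s.lower.preimage f.monotone⟩

@[simp]
theorem mem_comap {f : α →o β} {s : LowerSet β} {a : α} : a ∈ comap f s ↔ f a ∈ s := Iff.rfl

/-- Pulling lower sets back along a surjective p-morphism is an embedding of co-Heyting algebras:
the lifting property is what makes it commute with `\`. -/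
theorem isCoheytingEmb_comap (f : α →o β) (hf : Surjective f)
    (hlift : ∀ a b, f a ≤ b → ∃ a', a ≤ a' ∧ f a' = b) : IsCoheytingEmb (comap f) := by
  refine ⟨fun s t hst => ?_, rfl, rfl, fun _ _ => rfl, fun _ _ => rfl, fun s t => ?_⟩
  · ext b
    obtain ⟨a, rfl⟩ := hf b
    exact SetLike.ext_iff.1 hst a
  · refine SetLike.ext fun a => ?_
    rw [mem_comap, mem_sdiff_iff, mem_sdiff_iff]
    constructor
    · rintro ⟨b, hbs, hbt, hab⟩
      obtain ⟨a', haa', rfl⟩ := hlift a b hab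
      exact ⟨a', hbs, hbt, haa'⟩
    · rintro ⟨a', hs, ht, haa'⟩
      exact ⟨f a', hs, ht, f.monotone haa'⟩

end LowerSet

namespace SplittingExtension

open LowerSet

variable {Q : Type*} [Preorder Q] (A : LowerSet Q) (B : Bool → LowerSet Q)

/-- A point of `A` outside both `B i` may be coloured `some false` or `some true`: it is doubled,
one copy for each side of the splitting. Points of `B false \ B true` and `B true \ B false` get
the colour of their side, all other points the neutral colour `none`. -/
def Admissible (q : Q) : Option Bool → Prop
  | some i => q ∈ A ∧ q ∉ B (!i)
  | none => ∀ i, q ∈ A → q ∈ B i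

def Compatible : Option Bool → Option Bool → Prop
  | some i, some j => i = j
  | _, _ => True

structure Point where
  val : Q
  color : Option Bool
  admissible : Admissible A B val color

variable {A B}

theorem exists_admissible (q : Q) : ∃ c, Admissible A B q c := by
  by_cases h : ∃ i, q ∈ A ∧ q ∉ B (!i)
  · obtain ⟨i, hi⟩ := h
    exact ⟨some i, hi⟩
  · exact ⟨none, fun i hq => not_not.1 fun hqi => h ⟨!i, hq, by rwa [Bool.not_not]⟩⟩

theorem exists_compatible_admissible {q q' : Q} {c : Option Bool} (hc : Admissible A B q c)
    (hqq' : q ≤ q') : ∃ c', Admissible A B q' c' ∧ Compatible c c' := by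
  cases c with
  | none =>
    obtain ⟨c', hc'⟩ := exists_admissible (A := A) (B := B) q'
    exact ⟨c', hc', trivial⟩
  | some i =>
    by_cases hq' : q' ∈ A
    · exact ⟨some i, ⟨hq', fun h => hc.2 ((B !i).lower hqq' h)⟩, rfl⟩
    · exact ⟨none, fun _ h => absurd h hq', trivial⟩

theorem Point.compatible_trans {x y z : Point A B} (hxy : x.val ≤ y.val) (hyz : y.val ≤ z.val)
    (h₁ : Compatible x.color y.color) (h₂ : Compatible y.color z.color) :
    Compatible x.color z.color := by
  rcases x with ⟨q, _ | i, hx⟩ <;> rcases y with ⟨q', _ | j, hy⟩ <;>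
    rcases z with ⟨q'', _ | k, hz⟩ <;> simp only [Compatible] at h₁ h₂ ⊢
  · exact absurd ((B !i).lower hxy (hy (!i) (A.lower hyz hz.1))) hx.2
  · exact h₁.trans h₂

instance : Preorder (Point A B) where
  le x y := x.val ≤ y.val ∧ Compatible x.color y.color
  le_refl x := ⟨le_rfl, by cases x.color <;> trivial⟩
  le_trans _ _ _ hxy hyz := ⟨hxy.1.trans hyz.1, Point.compatible_trans hxy.1 hyz.1 hxy.2 hyz.2⟩

instance [Finite Q] : Finite (Point A B) :=
  Finite.of_injective (fun x : Point A B => (x.val, x.color))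
    (by rintro ⟨_, _, _⟩ ⟨_, _, _⟩ h; simpa using h)

def Point.proj : Point A B →o Q := ⟨Point.val, fun _ _ h => h.1⟩

theorem Point.proj_surjective : Surjective (Point.proj : Point A B → Q) := fun q =>
  let ⟨c, hc⟩ := exists_admissible q
  ⟨⟨q, c, hc⟩, rfl⟩

theorem Point.exists_le_proj_eq (x : Point A B) {q : Q} (hq : proj x ≤ q) :
    ∃ y, x ≤ y ∧ proj y = q :=
  let ⟨c, hc, hcomp⟩ := exists_compatible_admissible x.admissible hq
  ⟨⟨q, c, hc⟩, ⟨hq, hcomp⟩, rfl⟩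

variable (A B) in
def half (i : Bool) : LowerSet (Point A B) :=
  ⟨{x | x.val ∈ A ∧ x.color ≠ some (!i)}, by
    rintro ⟨q', c', hc'⟩ ⟨q, c, hc⟩ ⟨hle, hcomp⟩ ⟨hq'A, hc'i⟩
    refine ⟨A.lower hle hq'A, ?_⟩
    rintro rfl
    cases c' with
    | none => exact hc.2 (by simpa using (B i).lower hle (hc' i hq'A))
    | some j => exact hc'i (congrArg some hcomp.symm)⟩

theorem mem_half {x : Point A B} {i : Bool} :
    x ∈ half A B i ↔ x.val ∈ A ∧ x.color ≠ some (!i) := Iff.rfl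

section

variable (hA : ∀ q ∈ A, ∃ r ∈ A, q ≤ r ∧ ∀ i, r ∉ B i)
include hA

theorem comap_sdiff_half (i : Bool) : comap Point.proj A \ half A B i = half A B (!i) := by
  refine SetLike.ext fun x => ?_
  rw [mem_sdiff_iff, mem_half, Bool.not_not]
  constructor
  · rintro ⟨y, hyA, hyi, hxy⟩
    have hy : y.color = some (!i) := by
      by_contra h
      exact hyi ⟨hyA, h⟩
    refine ⟨A.lower hxy.1 hyA, fun hx => ?_⟩
    have := hxy.2
    rw [hx, hy] at this
    exact Bool.not_ne_self i this.symm
  · rintro ⟨hxA, hxi⟩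
    obtain ⟨r, hrA, hxr, hr⟩ := hA x.val hxA
    refine ⟨⟨r, some (!i), hrA, by simpa using hr i⟩, hrA, fun h => h.2 rfl, hxr, ?_⟩
    rcases hx : x.color with _ | j
    · trivial
    · have : j ≠ i := fun hj => hxi (hj ▸ hx)
      show j = !i
      cases i <;> cases j <;> simp_all

theorem half_ne_bot (hne : A ≠ ⊥) (i : Bool) : half A B i ≠ ⊥ := by
  obtain ⟨q, hq⟩ : (A : Set Q).Nonempty :=
    Set.nonempty_iff_ne_empty.2 fun h => hne (coe_eq_empty.1 h)
  obtain ⟨r, hrA, -, hr⟩ := hA q hq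
  intro h
  have hmem : (⟨r, some i, hrA, hr (!i)⟩ : Point A B) ∈ half A B i :=
    ⟨hrA, by cases i <;> simp⟩
  rw [h] at hmem
  exact hmem

end

section

variable (hB : ∀ i, B i ≤ A)
include hB

theorem comap_le_half (i : Bool) : comap Point.proj (B i) ≤ half A B i := by
  intro x hx
  refine ⟨hB i hx, fun h => ?_⟩
  have := x.admissible
  rw [h] at this
  exact this.2 (by rwa [Bool.not_not])

theorem half_inf_half :
    half A B false ⊓ half A B true = comap Point.proj (B false) ⊓ comap Point.proj (B true) := by
  refine le_antisymm ?_ (inf_le_inf (comap_le_half hB false) (comap_le_half hB true))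
  rintro x ⟨⟨hxA, hx₁⟩, -, hx₂⟩
  have hx : x.color = none := by
    rcases h : x.color with _ | (_ | _)
    · rfl
    · exact absurd h hx₂
    · exact absurd h hx₁
  have := x.admissible
  rw [hx] at this
  exact ⟨this false hxA, this true hxA⟩

end

theorem exists_le_forall_not_mem (h : A \ (B false ⊔ B true) = A) :
    ∀ q ∈ A, ∃ r ∈ A, q ≤ r ∧ ∀ i, r ∉ B i := by
  intro q hq
  rw [← h, mem_sdiff_iff] at hq
  obtain ⟨r, hrA, hrB, hqr⟩ := hq
  refine ⟨r, hrA, hqr, fun i hri => hrB ?_⟩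
  cases i
  · exact mem_sup_iff.2 (Or.inl hri)
  · exact mem_sup_iff.2 (Or.inr hri)

theorem splitExt (h : Ll (B false ⊔ B true) A) (hne : A ≠ ⊥) :
    SplitExt (LowerSet Q) (LowerSet (Point A B)) A (B false) (B true) := by
  have hA := exists_le_forall_not_mem h.1
  have hB : ∀ i, B i ≤ A := by
    intro i
    cases i
    exacts [le_sup_left.trans h.2, le_sup_right.trans h.2]
  exact ⟨comap Point.proj, half A B false, half A B true,
    isCoheytingEmb_comap _ Point.proj_surjective fun x _ => x.exists_le_proj_eq,
    half_ne_bot hA hne false, half_ne_bot hA hne true, comap_sdiff_half hA true,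
    comap_le_half hB false, comap_sdiff_half hA false, comap_le_half hB true, half_inf_half hB⟩

end SplittingExtension

open SplittingExtension in
theorem splitting_extension_exists (L : Type*) [CoheytingAlgebra L] [Finite L]
    (a b₁ b₂ : L) (h : Ll (b₁ ⊔ b₂) a) (ha : a ≠ ⊥) :
    ∃ (L' : Type) (inst : CoheytingAlgebra L'),
      Finite L' ∧ @SplitExt L _ L' inst a b₁ b₂ := by
  obtain ⟨Q, _, _, ⟨e⟩⟩ := exists_orderIso_lowerSet L
  let B : Bool → LowerSet Q := fun i => cond i (e b₂) (e b₁)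
  have hB : Ll (B false ⊔ B true) (e a) := by
    have := h.map_orderIso e
    rwa [map_sup] at this
  have he : e a ≠ ⊥ := by simpa using ha
  exact ⟨LowerSet (Point (e a) B), inferInstance, inferInstance,
    SplitExt.of_comap e.isCoheytingEmb (splitExt hB he)⟩
end
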